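/- arXiv:1505.04662 — 2 statements merged into one kernel-verified Lean document; each statement's English description precedes it below -/
import Mathlib

section
/- If f : X → X' is a (λ,μ)-quasi-isometry and (X,d) is uniformly coarsely proper at scales R > r > r_b, then (X',d') is uniformly coarsely proper at scales R' > r' > λμ + μ + r_b λ. -/
/-!
Pull a cover back along the quasi-isometry: a point of `X'` lies within `μ` of some `f x`, the
`R'`-ball around it pulls back into a ball of radius about `λ(R' + 3μ)` around `x`, and the
images of the `r`-balls covering that ball are contained in `(λr + 2μ)`-balls of `X'`. Choosing
`r = (r' - 2μ)/λ` makes these `r'`-balls, and `r > r_b` follows from `r' > λμ + μ + r_b λ`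
because `λμ ≥ μ`.
-/

open Metric

/-- Uniform coarse properness at scales `R > r > r_b` is `BallsCoveredBy X R r (N R r)` for all
such `R, r`. -/
def BallsCoveredBy (X : Type*) [PseudoMetricSpace X] (R r : ℝ) (n : ℕ) : Prop :=
  ∀ x : X, ∃ c : Finset X, c.card ≤ n ∧ ball x R ⊆ ⋃ y ∈ c, ball y r

section QuasiIsometry

variable {X X' : Type*} [PseudoMetricSpace X] [PseudoMetricSpace X'] {f : X → X'} {lam μ : ℝ}

theorem dist_lt_of_dist_map_lt (hlam : 0 < lam)
    (hlower : ∀ x y : X, lam⁻¹ * dist x y - μ ≤ dist (f x) (f y)) {x y : X} {s : ℝ}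
    (h : dist (f x) (f y) < s) : dist x y < lam * (s + μ) := by
  have : lam⁻¹ * dist x y < s + μ := by linarith [hlower x y]
  rwa [inv_mul_lt_iff₀ hlam] at this

theorem dist_map_lt_of_dist_lt (hlam : 0 < lam)
    (hupper : ∀ x y : X, dist (f x) (f y) ≤ lam * dist x y + μ) {x y : X} {r : ℝ}
    (h : dist x y < r) : dist (f x) (f y) < lam * r + μ := by
  linarith [hupper x y, mul_lt_mul_of_pos_left h hlam]

theorem BallsCoveredBy.of_quasiIsometry (hlam : 0 < lam)
    (hlower : ∀ x y : X, lam⁻¹ * dist x y - μ ≤ dist (f x) (f y))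
    (hupper : ∀ x y : X, dist (f x) (f y) ≤ lam * dist x y + μ)
    (hsurj : ∀ x' : X', ∃ x : X, dist x' (f x) ≤ μ)
    {R r R' r' : ℝ} {n : ℕ} (hR : lam * (R' + 3 * μ) ≤ R) (hr : lam * r + 2 * μ ≤ r')
    (hX : BallsCoveredBy X R r n) : BallsCoveredBy X' R' r' n := by
  classical
  intro x'
  obtain ⟨x, hx⟩ := hsurj x'
  obtain ⟨c, hcard, hcov⟩ := hX x
  refine ⟨c.image f, Finset.card_image_le.trans hcard, fun z' hz' => ?_⟩
  obtain ⟨z, hz⟩ := hsurj z'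
  have hfxz : dist (f x) (f z) < R' + 2 * μ := by
    linarith [dist_triangle4 (f x) x' z' (f z), dist_comm x' (f x), mem_ball'.mp hz']
  have hxz : z ∈ ball x R :=
    mem_ball'.mpr ((dist_lt_of_dist_map_lt hlam hlower hfxz).trans_le (by linarith))
  obtain ⟨y, hy, hzy⟩ := Set.mem_iUnion₂.mp (hcov hxz)
  refine Set.mem_iUnion₂.mpr ⟨f y, Finset.mem_image_of_mem f hy, mem_ball.mpr ?_⟩
  linarith [dist_triangle z' (f z) (f y), dist_map_lt_of_dist_lt hlam hupper (mem_ball.mp hzy)]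

end QuasiIsometry

theorem uniformlyCoarselyProper_of_quasiIsometry_general {X X' : Type*} [MetricSpace X]
    [MetricSpace X'] (f : X → X') (lam μ : ℝ) (hlam : 1 ≤ lam) (hμ : 0 ≤ μ)
    (hqi : ∀ x y : X, lam⁻¹ * dist x y - μ ≤ dist (f x) (f y) ∧
      dist (f x) (f y) ≤ lam * dist x y + μ)
    (hsurj : ∀ x' : X', ∃ x : X, dist x' (f x) ≤ μ)
    (N : ℝ → ℝ → ℕ) (rb : ℝ)
    (hX : ∀ R r, rb < r → r < R →
      ∀ x : X, ∃ c : Finset X, c.card ≤ N R r ∧ ball x R ⊆ ⋃ y ∈ c, ball y r) :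
    ∃ N' : ℝ → ℝ → ℕ, ∀ R' r', lam * μ + μ + rb * lam < r' → r' < R' →
      ∀ x' : X', ∃ c : Finset X', c.card ≤ N' R' r' ∧ ball x' R' ⊆ ⋃ y ∈ c, ball y r' := by
  have hlam0 : 0 < lam := one_pos.trans_le hlam
  let pullRadius (r' : ℝ) : ℝ := (r' - 2 * μ) / lam
  let pullBallRadius (R' r' : ℝ) : ℝ := max (lam * (R' + 3 * μ)) (pullRadius r') + 1
  refine ⟨fun R' r' => N (pullBallRadius R' r') (pullRadius r'), fun R' r' hr' _ => ?_⟩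
  have hrb : rb < pullRadius r' := by
    rw [lt_div_iff₀ hlam0]
    linarith [mul_le_mul_of_nonneg_right hlam hμ]
  have hr : lam * pullRadius r' + 2 * μ ≤ r' := by
    rw [mul_div_cancel₀ _ hlam0.ne', sub_add_cancel]
  have hR : lam * (R' + 3 * μ) < pullBallRadius R' r' := by
    linarith [le_max_left (lam * (R' + 3 * μ)) (pullRadius r')]
  have hrR : pullRadius r' < pullBallRadius R' r' := by
    linarith [le_max_right (lam * (R' + 3 * μ)) (pullRadius r')]
  exact BallsCoveredBy.of_quasiIsometry hlam0 (fun x y => (hqi x y).1) (fun x y => (hqi x y).2)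
    hsurj hR.le hr (hX _ _ hrb hrR)

/-- If `f : X → X'` is a `(λ,μ)`-quasi-isometry and `X` is uniformly
coarsely proper at scales `R > r > r_b`, then `X'` is uniformly coarsely proper at
scales `R' > r' > λμ + μ + r_b·λ`. -/
theorem uniformlyCoarselyProper_of_quasiIsometry {X X' : Type*} [MetricSpace X]
    [MetricSpace X'] (f : X → X') (lam μ : ℝ) (hlam : 1 ≤ lam) (hμ : 0 ≤ μ)
    (hqi : ∀ x y : X, lam⁻¹ * dist x y - μ ≤ dist (f x) (f y) ∧
      dist (f x) (f y) ≤ lam * dist x y + μ)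
    (hsurj : ∀ x' : X', ∃ x : X, dist x' (f x) ≤ μ)
    (N : ℝ → ℝ → ℕ) (rb : ℝ) (hrb : 0 < rb)
    (hX : ∀ R r, rb < r → r < R →
      ∀ x : X, ∃ c : Finset X, c.card ≤ N R r ∧ ball x R ⊆ ⋃ y ∈ c, ball y r) :
    ∃ N' : ℝ → ℝ → ℕ, ∀ R' r', lam * μ + μ + rb * lam < r' → r' < R' →
      ∀ x' : X', ∃ c : Finset X', c.card ≤ N' R' r' ∧ ball x' R' ⊆ ⋃ y ∈ c, ball y r' :=
  uniformlyCoarselyProper_of_quasiIsometry_general f lam μ hlam hμ hqi hsurj N rb hX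
end

section
/- Let (Z,d) be a bounded uniformly coarsely connected space with at least two points whose hyperbolic cone (H(Z),ρ) is 2μ-roughly geodesic, and let L = 1+2μ. Define ρ_r(x,y) on H(Z)\B_r as the infimum of sums Σ ρ(y_i,y_{i+1}) over finite L-chains from x to y staying in H(Z)\B_r (consecutive ρ-distances ≤ L). Then ρ_r is a metric on H(Z)\B_r; in particular ρ_r(x,y) < ∞ for all x,y, ρ_r ≥ ρ, and ρ_r(x,y) = ρ(x,y) whenever ρ(x,y) ≤ L. -/
open Metric

/-- The hyperbolic cone "metric" on `H(Z) = Z × [0,∞)`. -/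
noncomputable def hypConeRho {Z : Type*} [MetricSpace Z] (D : ℝ) (p q : Z × ℝ) : ℝ :=
  2 * Real.log ((dist p.1 q.1 + max (Real.exp (-p.2)) (Real.exp (-q.2)) * D) /
    (Real.exp (-(p.2 + q.2) / 2) * D))

/-- The set of lengths of admissible `L`-chains from `x` to `y` staying in
`H(Z) \ B_r = Z × [r,∞)`. -/
noncomputable def chainSums {Z : Type*} [MetricSpace Z] (D L r : ℝ) (x y : Z × ℝ) :
    Set ℝ :=
  {S | ∃ (n : ℕ) (c : ℕ → Z × ℝ), c 0 = x ∧ c n = y ∧ (∀ i ≤ n, r ≤ (c i).2) ∧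
    (∀ i < n, hypConeRho D (c i) (c (i + 1)) ≤ L) ∧
    S = ∑ i ∈ Finset.range n, hypConeRho D (c i) (c (i + 1))}

/-- The chain metric `ρ_r` on `H(Z) \ B_r`. -/
noncomputable def chainDist {Z : Type*} [MetricSpace Z] (D L r : ℝ) (x y : Z × ℝ) : ℝ :=
  sInf (chainSums D L r x y)

open Real Pointwise

/-!
Write `g(p, q) = d(p₁, q₁) + e^{-min(p₂, q₂)} D` for the numerator in the definition of `ρ`.
Then `ρ(p, q) = log (g(p, q)² / (g(p, p) g(q, q)))`, so the triangle inequality for `ρ` is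
the multiplicative inequality `g(x, y) g(z, z) ≤ g(x, z) g(z, y)`, which follows from the
triangle inequality in `Z` and `min t u + min u s ≤ min t s + u`. Equivalently
`ρ(p, q) = 2 log (1 + e^{min(p₂, q₂)} d(p₁, q₁) / D) + |p₂ - q₂|`, which gives `ρ = 0` only on
the diagonal and computes vertical and horizontal steps. Chain sums inherit from `ρ` the lower
bound `ρ ≤ ρ_r`, symmetry (reverse the chain) and the triangle inequality (concatenate).
Finiteness: from `x` and `y` go vertically up to the height `R = max(x₂, y₂)` in steps of
length at most `L`; at height `R` two points are `ρ`-close as soon as their projections are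
within `e^{-R} D (e^{L/2} - 1)`, and uniform coarse connectedness of `Z` joins them by such steps.
-/

section

variable {Z : Type*} [MetricSpace Z] {D L r : ℝ}

noncomputable def hypConeGauge (D : ℝ) (p q : Z × ℝ) : ℝ :=
  dist p.1 q.1 + exp (-min p.2 q.2) * D

lemma hypConeGauge_self (D : ℝ) (p : Z × ℝ) : hypConeGauge D p p = exp (-p.2) * D := by
  simp [hypConeGauge]

lemma hypConeGauge_pos (hD : 0 < D) (p q : Z × ℝ) : 0 < hypConeGauge D p q := by
  unfold hypConeGauge; positivity

lemma min_add_min_le_min_add (t u s : ℝ) : min t u + min u s ≤ min t s + u := by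
  rcases le_total t s with h | h
  · rw [min_eq_left h]; linarith [min_le_left t u, min_le_left u s]
  · rw [min_eq_right h]; linarith [min_le_right t u, min_le_right u s]

lemma hypConeGauge_mul_le_mul (hD : 0 ≤ D) (x z y : Z × ℝ) :
    hypConeGauge D x y * hypConeGauge D z z ≤ hypConeGauge D x z * hypConeGauge D z y := by
  simp only [hypConeGauge, min_self, dist_self, zero_add]
  have hxz : exp (-z.2) ≤ exp (-min x.2 z.2) := exp_le_exp.2 (by simp)
  have hzy : exp (-z.2) ≤ exp (-min z.2 y.2) := exp_le_exp.2 (by simp)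
  have hmin : exp (-min x.2 y.2) * exp (-z.2) ≤ exp (-min x.2 z.2) * exp (-min z.2 y.2) := by
    rw [← exp_add, ← exp_add]
    exact exp_le_exp.2 (by linarith [min_add_min_le_min_add x.2 z.2 y.2])
  have htri := dist_triangle x.1 z.1 y.1
  have hd₁ := dist_nonneg (x := x.1) (y := z.1)
  have hd₂ := dist_nonneg (x := z.1) (y := y.1)
  linarith [mul_le_mul_of_nonneg_right hmin (mul_nonneg hD hD),
    mul_le_mul_of_nonneg_left hxz (mul_nonneg hd₂ hD),
    mul_le_mul_of_nonneg_left hzy (mul_nonneg hd₁ hD),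
    mul_le_mul_of_nonneg_right htri (mul_nonneg (exp_pos (-z.2)).le hD), mul_nonneg hd₁ hd₂]

lemma hypConeRho_eq_log_gauge (hD : 0 < D) (p q : Z × ℝ) :
    hypConeRho D p q =
      2 * log (hypConeGauge D p q) - log (hypConeGauge D p p) - log (hypConeGauge D q q) := by
  have hmax : max (exp (-p.2)) (exp (-q.2)) = exp (-min p.2 q.2) := by
    rw [← exp_monotone.map_max, max_neg_neg]
  have hg := hypConeGauge_pos hD p q
  rw [hypConeRho, hmax, ← hypConeGauge, log_div hg.ne' (by positivity),
    log_mul (by positivity) hD.ne', hypConeGauge_self, hypConeGauge_self,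
    log_mul (by positivity) hD.ne', log_mul (by positivity) hD.ne', log_exp, log_exp, log_exp]
  ring

lemma hypConeRho_eq_log_add_abs (hD : 0 < D) (p q : Z × ℝ) :
    hypConeRho D p q = 2 * log (1 + exp (min p.2 q.2) * dist p.1 q.1 / D) + |p.2 - q.2| := by
  have hfac : hypConeGauge D p q =
      exp (-min p.2 q.2) * D * (1 + exp (min p.2 q.2) * dist p.1 q.1 / D) := by
    rw [hypConeGauge, exp_neg]; field_simp; ring
  rw [hypConeRho_eq_log_gauge hD, hfac, hypConeGauge_self, hypConeGauge_self,
    log_mul (by positivity) (by positivity), log_mul (by positivity) hD.ne',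
    log_mul (by positivity) hD.ne', log_mul (by positivity) hD.ne', log_exp, log_exp, log_exp,
    ← max_sub_min_eq_abs']
  rcases le_total p.2 q.2 with h | h
  · rw [min_eq_left h, max_eq_right h]; ring
  · rw [min_eq_right h, max_eq_left h]; ring

lemma hypConeRho_comm (D : ℝ) (p q : Z × ℝ) : hypConeRho D p q = hypConeRho D q p := by
  rw [hypConeRho, hypConeRho, dist_comm, max_comm, add_comm p.2]

lemma hypConeRho_self (hD : 0 < D) (p : Z × ℝ) : hypConeRho D p p = 0 := by
  rw [hypConeRho_eq_log_gauge hD]; ring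

lemma hypConeRho_nonneg (hD : 0 < D) (p q : Z × ℝ) : 0 ≤ hypConeRho D p q := by
  rw [hypConeRho_eq_log_add_abs hD]
  have : 0 ≤ exp (min p.2 q.2) * dist p.1 q.1 / D := by positivity
  have : 0 ≤ log (1 + exp (min p.2 q.2) * dist p.1 q.1 / D) := log_nonneg (by linarith)
  positivity

lemma hypConeRho_triangle (hD : 0 < D) (x z y : Z × ℝ) :
    hypConeRho D x y ≤ hypConeRho D x z + hypConeRho D z y := by
  have hg : ∀ p q : Z × ℝ, hypConeGauge D p q ≠ 0 := fun p q => (hypConeGauge_pos hD p q).ne'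
  have key := log_le_log (mul_pos (hypConeGauge_pos hD x y) (hypConeGauge_pos hD z z))
    (hypConeGauge_mul_le_mul hD.le x z y)
  rw [log_mul (hg _ _) (hg _ _), log_mul (hg _ _) (hg _ _)] at key
  rw [hypConeRho_eq_log_gauge hD, hypConeRho_eq_log_gauge hD, hypConeRho_eq_log_gauge hD]
  linarith

lemma eq_of_hypConeRho_eq_zero (hD : 0 < D) {p q : Z × ℝ} (h : hypConeRho D p q = 0) :
    p = q := by
  rw [hypConeRho_eq_log_add_abs hD] at h
  have hx : 0 ≤ exp (min p.2 q.2) * dist p.1 q.1 / D := by positivity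
  have hlog : 0 ≤ log (1 + exp (min p.2 q.2) * dist p.1 q.1 / D) := log_nonneg (by linarith)
  obtain ⟨hlog₀, habs⟩ := (add_eq_zero_iff_of_nonneg (by positivity) (abs_nonneg _)).1 h
  have hx₀ : 1 + exp (min p.2 q.2) * dist p.1 q.1 / D = 1 :=
    eq_one_of_pos_of_log_eq_zero (by linarith) (by linarith)
  simp only [add_eq_left, div_eq_zero_iff, mul_eq_zero, exp_ne_zero, false_or,
    dist_eq_zero, hD.ne', or_false] at hx₀
  exact Prod.ext hx₀ (sub_eq_zero.1 (abs_eq_zero.1 habs))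

lemma hypConeRho_vertical (hD : 0 < D) (z : Z) (t s : ℝ) :
    hypConeRho D (z, t) (z, s) = |t - s| := by
  simp [hypConeRho_eq_log_add_abs hD]

lemma hypConeRho_horizontal_le (hD : 0 < D) {L : ℝ} (u v : Z) (R : ℝ)
    (h : dist u v ≤ exp (-R) * D * (exp (L / 2) - 1)) :
    hypConeRho D (u, R) (v, R) ≤ L := by
  rw [hypConeRho_eq_log_add_abs hD]
  have hle : 1 + exp R * dist u v / D ≤ exp (L / 2) := by
    rw [← le_sub_iff_add_le', div_le_iff₀ hD, ← le_div_iff₀' (exp_pos R), div_eq_mul_inv,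
      ← exp_neg]
    linarith
  have := log_le_log (by positivity) hle
  rw [log_exp] at this
  rw [min_self, sub_self, abs_zero, add_zero]
  linarith

lemma zero_mem_chainSums {x : Z × ℝ} (hx : r ≤ x.2) : (0 : ℝ) ∈ chainSums D L r x x :=
  ⟨0, fun _ => x, rfl, rfl, fun _ _ => hx, by simp, by simp⟩

lemma hypConeRho_mem_chainSums {x y : Z × ℝ} (hx : r ≤ x.2) (hy : r ≤ y.2)
    (h : hypConeRho D x y ≤ L) : hypConeRho D x y ∈ chainSums D L r x y := by
  refine ⟨1, fun i => if i = 0 then x else y, by simp, by simp, ?_, ?_, by simp⟩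
  · intro i hi; interval_cases i <;> simp [hx, hy]
  · intro i hi; interval_cases i; simpa using h

lemma add_mem_chainSums {x z y : Z × ℝ} {S₁ S₂ : ℝ}
    (h₁ : S₁ ∈ chainSums D L r x z) (h₂ : S₂ ∈ chainSums D L r z y) :
    S₁ + S₂ ∈ chainSums D L r x y := by
  obtain ⟨n₁, c₁, hc₁0, hc₁n, hr₁, hL₁, rfl⟩ := h₁
  obtain ⟨n₂, c₂, hc₂0, hc₂n, hr₂, hL₂, rfl⟩ := h₂
  set c : ℕ → Z × ℝ := fun i => if i ≤ n₁ then c₁ i else c₂ (i - n₁)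
  have hc_left : ∀ i ≤ n₁, c i = c₁ i := fun i hi => if_pos hi
  have hc_right : ∀ j, c (n₁ + j) = c₂ j := by
    intro j
    rcases j.eq_zero_or_pos with rfl | hj
    · simp [c, hc₁n, hc₂0]
    · simp [c, show ¬ n₁ + j ≤ n₁ by omega]
  refine ⟨n₁ + n₂, c, by simp [c, hc₁0], by rw [hc_right, hc₂n], ?_, ?_, ?_⟩
  · intro i hi
    rcases le_or_gt i n₁ with h | h
    · rw [hc_left i h]; exact hr₁ i h
    · obtain ⟨j, rfl⟩ := Nat.exists_eq_add_of_le h.le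
      rw [hc_right]; exact hr₂ j (by omega)
  · intro i hi
    rcases lt_or_ge i n₁ with h | h
    · rw [hc_left i h.le, hc_left (i + 1) h]; exact hL₁ i h
    · obtain ⟨j, rfl⟩ := Nat.exists_eq_add_of_le h
      rw [hc_right, add_assoc, hc_right]; exact hL₂ j (by omega)
  · rw [Finset.sum_range_add]
    congr 1
    · refine Finset.sum_congr rfl fun i hi => ?_
      have hi := Finset.mem_range.1 hi
      rw [hc_left i hi.le, hc_left (i + 1) hi]
    · refine Finset.sum_congr rfl fun j _ => ?_
      rw [hc_right, add_assoc, hc_right]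

lemma chainSums_subset_swap {x y : Z × ℝ} : chainSums D L r x y ⊆ chainSums D L r y x := by
  rintro S ⟨n, c, hc0, hcn, hr, hL, rfl⟩
  have hstep : ∀ i < n, hypConeRho D (c (n - i)) (c (n - (i + 1))) =
      hypConeRho D (c (n - 1 - i)) (c (n - 1 - i + 1)) := by
    intro i hi
    rw [hypConeRho_comm, show n - i = n - 1 - i + 1 by omega,
      show n - (i + 1) = n - 1 - i by omega]
  refine ⟨n, fun i => c (n - i), by simpa using hcn, by simpa using hc0,
    fun i _ => hr (n - i) (Nat.sub_le n i), fun i hi => ?_, ?_⟩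
  · rw [hstep i hi]; exact hL _ (by omega)
  · rw [← Finset.sum_range_reflect]
    exact Finset.sum_congr rfl fun i hi => (hstep i (Finset.mem_range.1 hi)).symm

lemma chainSums_comm (x y : Z × ℝ) : chainSums D L r x y = chainSums D L r y x :=
  chainSums_subset_swap.antisymm chainSums_subset_swap

lemma hypConeRho_le_of_mem_chainSums (hD : 0 < D) {x y : Z × ℝ} {S : ℝ}
    (hS : S ∈ chainSums D L r x y) : hypConeRho D x y ≤ S := by
  obtain ⟨n, c, rfl, rfl, -, -, rfl⟩ := hS
  induction n with
  | zero => simp [hypConeRho_self hD]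
  | succ n ih =>
    rw [Finset.sum_range_succ]
    exact (hypConeRho_triangle hD _ (c n) _).trans (by gcongr)

lemma chainSums_vertical_nonempty (hD : 0 < D) (hL : 0 < L) (z : Z) {t T : ℝ}
    (hrt : r ≤ t) (htT : t ≤ T) : (chainSums D L r (z, t) (z, T)).Nonempty := by
  set n := ⌈(T - t) / L⌉₊
  rcases (Nat.zero_le n).eq_or_lt with hn | hn
  · obtain rfl : T = t := by
      have := (div_le_iff₀ hL).1 (Nat.ceil_eq_zero.1 hn.symm)
      linarith
    exact ⟨0, zero_mem_chainSums hrt⟩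
  have hn' : (0 : ℝ) < n := by exact_mod_cast hn
  set step := (T - t) / n
  have hstep0 : 0 ≤ step := div_nonneg (by linarith) hn'.le
  have hstepL : step ≤ L := by
    rw [div_le_iff₀ hn', ← div_le_iff₀' hL]
    exact Nat.le_ceil _
  refine ⟨_, n, fun i => (z, t + i * step), by simp, ?_, fun i _ => ?_, fun i _ => ?_, rfl⟩
  · simp only [step]; field_simp; ring_nf
  · simp only; nlinarith [(Nat.cast_nonneg i : (0 : ℝ) ≤ i)]
  · rw [hypConeRho_vertical hD]
    push_cast
    rw [show t + i * step - (t + (i + 1) * step) = -step by ring, abs_neg, abs_of_nonneg hstep0]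
    exact hstepL

lemma chainSums_nonempty (hD : 0 < D) (hL : 0 < L)
    (hucc : ∀ ε > (0:ℝ), ∀ x y : Z, ∃ (n : ℕ) (c : ℕ → Z),
      c 0 = x ∧ c n = y ∧ ∀ i < n, dist (c i) (c (i + 1)) ≤ ε)
    {x y : Z × ℝ} (hx : r ≤ x.2) (hy : r ≤ y.2) : (chainSums D L r x y).Nonempty := by
  set R := max x.2 y.2
  obtain ⟨S₁, hS₁⟩ := chainSums_vertical_nonempty (D := D) hD hL x.1 hx (le_max_left x.2 y.2)
  obtain ⟨S₃, hS₃⟩ := chainSums_vertical_nonempty (D := D) hD hL y.1 hy (le_max_right x.2 y.2)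
  obtain ⟨n, c, hc0, hcn, hc⟩ := hucc (exp (-R) * D * (exp (L / 2) - 1))
    (by have := one_lt_exp_iff.2 (half_pos hL); have := exp_pos (-R); positivity) x.1 y.1
  have hS₂ : ∑ i ∈ Finset.range n, hypConeRho D (c i, R) (c (i + 1), R) ∈
      chainSums D L r (x.1, R) (y.1, R) :=
    ⟨n, fun i => (c i, R), by simp [hc0], by simp [hcn], fun _ _ => hx.trans (le_max_left _ _),
      fun i hi => hypConeRho_horizontal_le hD _ _ R (hc i hi), rfl⟩
  rw [chainSums_comm] at hS₃
  exact ⟨_, add_mem_chainSums (add_mem_chainSums hS₁ hS₂) hS₃⟩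

lemma chainSums_bddBelow (hD : 0 < D) (x y : Z × ℝ) : BddBelow (chainSums D L r x y) :=
  ⟨hypConeRho D x y, fun _ => hypConeRho_le_of_mem_chainSums hD⟩

lemma hypConeRho_le_chainDist (hD : 0 < D) {x y : Z × ℝ}
    (hne : (chainSums D L r x y).Nonempty) : hypConeRho D x y ≤ chainDist D L r x y :=
  le_csInf hne fun _ => hypConeRho_le_of_mem_chainSums hD

lemma chainDist_le_of_mem (hD : 0 < D) {x y : Z × ℝ} {S : ℝ} (hS : S ∈ chainSums D L r x y) :
    chainDist D L r x y ≤ S :=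
  csInf_le (chainSums_bddBelow hD x y) hS

lemma chainDist_eq_hypConeRho (hD : 0 < D) {x y : Z × ℝ} (hx : r ≤ x.2) (hy : r ≤ y.2)
    (h : hypConeRho D x y ≤ L) : chainDist D L r x y = hypConeRho D x y :=
  (chainDist_le_of_mem hD (hypConeRho_mem_chainSums hx hy h)).antisymm
    (hypConeRho_le_chainDist hD ⟨_, hypConeRho_mem_chainSums hx hy h⟩)

lemma chainDist_self (hD : 0 < D) (hL : 0 ≤ L) {x : Z × ℝ} (hx : r ≤ x.2) :
    chainDist D L r x x = 0 := by
  rw [chainDist_eq_hypConeRho hD hx hx (by rwa [hypConeRho_self hD]), hypConeRho_self hD]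

lemma chainDist_eq_zero_iff (hD : 0 < D) (hL : 0 ≤ L) {x y : Z × ℝ} (hx : r ≤ x.2)
    (hne : (chainSums D L r x y).Nonempty) : chainDist D L r x y = 0 ↔ x = y := by
  refine ⟨fun h => eq_of_hypConeRho_eq_zero hD ?_, by rintro rfl; exact chainDist_self hD hL hx⟩
  exact le_antisymm (h ▸ hypConeRho_le_chainDist hD hne) (hypConeRho_nonneg hD x y)

lemma chainDist_comm (x y : Z × ℝ) : chainDist D L r x y = chainDist D L r y x := by
  rw [chainDist, chainDist, chainSums_comm]

lemma chainDist_triangle (hD : 0 < D) {x z y : Z × ℝ} (hxz : (chainSums D L r x z).Nonempty)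
    (hzy : (chainSums D L r z y).Nonempty) :
    chainDist D L r x y ≤ chainDist D L r x z + chainDist D L r z y := by
  rw [chainDist, chainDist, chainDist,
    ← csInf_add hxz (chainSums_bddBelow hD x z) hzy (chainSums_bddBelow hD z y)]
  refine csInf_le_csInf (chainSums_bddBelow hD x y) (hxz.add hzy) ?_
  rintro _ ⟨S₁, hS₁, S₂, hS₂, rfl⟩
  exact add_mem_chainSums hS₁ hS₂

end

theorem chainDist_is_metric_general {Z : Type*} [MetricSpace Z]
    (hbdd : Bornology.IsBounded (Set.univ : Set Z)) (a b : Z) (hab : a ≠ b)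
    (D : ℝ) (hD : D = Metric.diam (Set.univ : Set Z))
    (hucc : ∀ ε > (0:ℝ), ∀ x y : Z, ∃ (n : ℕ) (c : ℕ → Z),
      c 0 = x ∧ c n = y ∧ ∀ i < n, dist (c i) (c (i + 1)) ≤ ε)
    (μ : ℝ) (hμ : 0 ≤ μ)
    (L : ℝ) (hL : L = 1 + 2 * μ) :
    ∀ r : ℝ, 0 ≤ r → ∀ x y : Z × ℝ, r ≤ x.2 → r ≤ y.2 →
      (chainSums D L r x y).Nonempty ∧
      (chainDist D L r x y = 0 ↔ x = y) ∧
      chainDist D L r x y = chainDist D L r y x ∧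
      (∀ z : Z × ℝ, r ≤ z.2 →
        chainDist D L r x y ≤ chainDist D L r x z + chainDist D L r z y) ∧
      hypConeRho D x y ≤ chainDist D L r x y ∧
      (hypConeRho D x y ≤ L → chainDist D L r x y = hypConeRho D x y) := by
  have hD₀ : 0 < D :=
    hD ▸ (dist_pos.2 hab).trans_le (Metric.dist_le_diam_of_mem hbdd trivial trivial)
  have hL₀ : 0 < L := by linarith
  intro r _ x y hx hy
  have hne : ∀ {u v : Z × ℝ}, r ≤ u.2 → r ≤ v.2 → (chainSums D L r u v).Nonempty :=
    chainSums_nonempty hD₀ hL₀ hucc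
  exact ⟨hne hx hy, chainDist_eq_zero_iff hD₀ hL₀.le hx (hne hx hy), chainDist_comm x y,
    fun z hz => chainDist_triangle hD₀ (hne hx hz) (hne hz hy),
    hypConeRho_le_chainDist hD₀ (hne hx hy), chainDist_eq_hypConeRho hD₀ hx hy⟩

/-- If `(Z,d)` is bounded, uniformly coarsely connected with at least
two points and the cone `(H(Z),ρ)` is `2μ`-roughly geodesic, then with `L = 1 + 2μ` the
chain distance `ρ_r` is a metric on `H(Z) \ B_r`; in particular it is finite,
`ρ_r ≥ ρ` and `ρ_r(x,y) = ρ(x,y)` whenever `ρ(x,y) ≤ L`. -/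
theorem chainDist_is_metric {Z : Type*} [MetricSpace Z]
    (hbdd : Bornology.IsBounded (Set.univ : Set Z)) (a b : Z) (hab : a ≠ b)
    (D : ℝ) (hD : D = Metric.diam (Set.univ : Set Z))
    (hucc : ∀ ε > (0:ℝ), ∀ x y : Z, ∃ (n : ℕ) (c : ℕ → Z),
      c 0 = x ∧ c n = y ∧ ∀ i < n, dist (c i) (c (i + 1)) ≤ ε)
    (μ : ℝ) (hμ : 0 ≤ μ)
    (hrough : ∀ p q : Z × ℝ, 0 ≤ p.2 → 0 ≤ q.2 →
      ∃ γ : ℝ → Z × ℝ, γ 0 = p ∧ γ (hypConeRho D p q) = q ∧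
        (∀ u ∈ Set.Icc 0 (hypConeRho D p q), 0 ≤ (γ u).2) ∧
        ∀ s ∈ Set.Icc 0 (hypConeRho D p q), ∀ t ∈ Set.Icc 0 (hypConeRho D p q),
          abs (hypConeRho D (γ s) (γ t) - |s - t|) ≤ 2 * μ)
    (L : ℝ) (hL : L = 1 + 2 * μ) :
    ∀ r : ℝ, 0 ≤ r → ∀ x y : Z × ℝ, r ≤ x.2 → r ≤ y.2 →
      (chainSums D L r x y).Nonempty ∧
      (chainDist D L r x y = 0 ↔ x = y) ∧
      chainDist D L r x y = chainDist D L r y x ∧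
      (∀ z : Z × ℝ, r ≤ z.2 →
        chainDist D L r x y ≤ chainDist D L r x z + chainDist D L r z y) ∧
      hypConeRho D x y ≤ chainDist D L r x y ∧
      (hypConeRho D x y ≤ L → chainDist D L r x y = hypConeRho D x y) :=
  chainDist_is_metric_general hbdd a b hab D hD hucc μ hμ L hL
end
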